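/- arXiv:1904.03214 — 5 statements merged into one kernel-verified Lean document; each statement's English description precedes it below -/
import Mathlib

section
/- For any graph homomorphism f from the m-cycle C_m to the l-cycle C_l (m, l ≥ 3), there exists an integer d such that the image under the induced map on edge chains of the oriented cycle O_m = [0,1]+[1,2]+...+[m-1,0] equals d · O_l. (Equivalently: the only edge chains W in the free abelian group on oriented edges of C_l with boundary ∂W = 0 are integer multiples of O_l.) -/
/-- The oriented edge `[u,v]` as an edge chain: the antisymmetrized generator. -/
noncomputable def oe {V : Type*} [DecidableEq V] (u v : V) : V × V →₀ ℤ :=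
  Finsupp.single (u, v) 1 - Finsupp.single (v, u) 1

/-- The map on edge chains induced by a map on vertices. -/
noncomputable def fE {V W : Type*} [DecidableEq V] [DecidableEq W] (f : V → W) :
    (V × V →₀ ℤ) →+ (W × W →₀ ℤ) :=
  Finsupp.mapDomain.addMonoidHom (Prod.map f f)

/-- Adjacency in the `m`-cycle on vertex set `ZMod m`. -/
def CycAdj (m : ℕ) (u v : ZMod m) : Prop := v = u + 1 ∨ v = u - 1

/-- The oriented cycle `O_m = [0,1] + [1,2] + ⋯ + [m-1,0]` as an edge chain. -/
noncomputable def cycO (m : ℕ) : ZMod m × ZMod m →₀ ℤ :=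
  ∑ i ∈ Finset.range m, oe (i : ZMod m) ((i : ZMod m) + 1)

section aux

variable {V W : Type*} [DecidableEq V] [DecidableEq W]

lemma oe_swap (u v : V) : oe u v = - oe v u := by
  simp only [oe]; abel

lemma fE_oe (f : V → W) (u v : V) : fE f (oe u v) = oe (f u) (f v) := by
  simp [fE, oe, Finsupp.mapDomain_single, Finsupp.mapDomain.addMonoidHom_apply,
    map_sub]

/-- boundary map (up to a factor of 2) -/
noncomputable def bnd {V : Type*} [DecidableEq V] : (V × V →₀ ℤ) →+ (V →₀ ℤ) :=
  Finsupp.liftAddHom fun p => zmultiplesHom _ (Finsupp.single p.2 1 - Finsupp.single p.1 1)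

lemma bnd_single (u v : V) (n : ℤ) :
    bnd (Finsupp.single (u, v) n) = n • (Finsupp.single v 1 - Finsupp.single u 1) := by
  simp [bnd]

lemma bnd_oe (u v : V) :
    bnd (oe u v) = (2 : ℤ) • (Finsupp.single v 1 - Finsupp.single u 1) := by
  rw [oe, map_sub, bnd_single, bnd_single]
  simp only [one_smul]
  abel

lemma bnd_fE (f : V → W) (x : V × V →₀ ℤ) :
    bnd (fE f x) = Finsupp.mapDomain f (bnd x) := by
  induction x using Finsupp.induction_linear with
  | zero => simp
  | add a b ha hb => simp only [map_add, Finsupp.mapDomain_add, ha, hb]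
  | single p n =>
      obtain ⟨u, v⟩ := p
      rw [fE, Finsupp.mapDomain.addMonoidHom_apply, Finsupp.mapDomain_single,
        bnd_single, bnd_single]
      rw [← Finsupp.mapDomain.addMonoidHom_apply f, map_zsmul, map_sub,
        Finsupp.mapDomain.addMonoidHom_apply, Finsupp.mapDomain.addMonoidHom_apply,
        Finsupp.mapDomain_single, Finsupp.mapDomain_single]
      rfl

end aux

lemma bnd_cycO (m : ℕ) : bnd (cycO m) = 0 := by
  rw [cycO, map_sum]
  have h : ∀ i ∈ Finset.range m, bnd (oe (i : ZMod m) ((i : ZMod m) + 1)) =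
      ((2 : ℤ) • Finsupp.single (((i + 1 : ℕ) : ZMod m)) (1 : ℤ))
        - (2 : ℤ) • Finsupp.single ((i : ZMod m)) (1 : ℤ) := by
    intro i _
    rw [bnd_oe, smul_sub]
    push_cast
    ring_nf
  rw [Finset.sum_congr rfl h, Finset.sum_range_sub
    (fun i => (2 : ℤ) • Finsupp.single ((i : ZMod m)) (1 : ℤ))]
  simp

/-- For any graph homomorphism `f : C_m → C_l` (`m, l ≥ 3`), there is an integer `d`
with `f_E(O_m) = d • O_l`. -/
theorem cycle_hom_degree_exists (m l : ℕ) (hm : 3 ≤ m) (hl : 3 ≤ l)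
    (f : ZMod m → ZMod l) (hf : ∀ u v, CycAdj m u v → CycAdj l (f u) (f v)) :
    ∃ d : ℤ, fE f (cycO m) = d • cycO l := by
  have : NeZero l := ⟨by omega⟩
  -- Step 1: each edge image is ± a positively oriented edge
  have hstep : ∀ i : ℕ, ∃ (a : ℤ) (v : ZMod l),
      fE f (oe (i : ZMod m) ((i : ZMod m) + 1)) = a • oe v (v + 1) := by
    intro i
    have h := hf (i : ZMod m) ((i : ZMod m) + 1) (Or.inl rfl)
    rw [fE_oe]
    rcases h with h | h
    · exact ⟨1, f (i : ZMod m), by rw [h, one_smul]⟩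
    · refine ⟨-1, f ((i : ZMod m) + 1), ?_⟩
      rw [h, neg_smul, one_smul, ← oe_swap, sub_add_cancel]
  choose a g hg using hstep
  set W := fE f (cycO m) with hW
  set c : ZMod l → ℤ := fun v => ∑ i ∈ (Finset.range m).filter (fun i => g i = v), a i with hc
  have hWsum : W = ∑ v : ZMod l, c v • oe v (v + 1) := by
    rw [hW, cycO, map_sum, Finset.sum_congr rfl (fun i _ => hg i)]
    rw [← Finset.sum_fiberwise (Finset.range m) g (fun i => a i • oe (g i) (g i + 1))]
    refine Finset.sum_congr rfl fun v _ => ?_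
    rw [hc, Finset.sum_smul]
    refine Finset.sum_congr rfl fun i hi => ?_
    rw [Finset.mem_filter] at hi
    rw [hi.2]
  have hbnd : bnd W = 0 := by
    rw [hW, bnd_fE, bnd_cycO, Finsupp.mapDomain_zero]
  -- constancy of c
  have hkey : ∀ w : ZMod l, c (w - 1) = c w := by
    intro w
    have h0 : (bnd W) w = 0 := by rw [hbnd]; rfl
    rw [hWsum, map_sum] at h0
    have h1 : ∀ v ∈ (Finset.univ : Finset (ZMod l)),
        bnd (c v • oe v (v + 1)) = (2 * c v) • Finsupp.single (v + 1) (1 : ℤ)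
          - (2 * c v) • Finsupp.single v (1 : ℤ) := by
      intro v _
      rw [map_zsmul, bnd_oe, smul_smul, mul_comm, smul_sub]
    rw [Finset.sum_congr rfl h1, Finsupp.finset_sum_apply] at h0
    simp only [Finsupp.sub_apply, Finsupp.smul_apply, Finsupp.single_apply,
      smul_eq_mul, mul_ite, mul_one, mul_zero] at h0
    have h2 : ∀ v : ZMod l,
        ((if v + 1 = w then 2 * c v else 0) - if v = w then 2 * c v else 0)
        = ((if v = w - 1 then 2 * c v else 0) - if v = w then 2 * c v else 0) := by
      intro v
      have hiff : (v + 1 = w) ↔ (v = w - 1) := by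
        constructor <;> intro h <;> [rw [← h]; rw [h]] <;> ring
      rw [if_congr hiff rfl rfl]
    rw [Finset.sum_congr rfl (fun v _ => h2 v), Finset.sum_sub_distrib,
      Finset.sum_ite_eq' Finset.univ (w - 1) (fun v => 2 * c v),
      Finset.sum_ite_eq' Finset.univ w (fun v => 2 * c v)] at h0
    simp only [Finset.mem_univ, if_true] at h0
    omega
  have hstep' : ∀ v : ZMod l, c v = c (v + 1) := by
    intro v
    have := hkey (v + 1)
    rwa [add_sub_cancel_right] at this
  have hconst : ∀ n : ℕ, c ((n : ℕ) : ZMod l) = c 0 := by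
    intro n
    induction n with
    | zero => simp
    | succ n ih => push_cast; rw [← hstep' (n : ZMod l), ih]
  have hconst' : ∀ v : ZMod l, c v = c 0 := by
    intro v
    have := hconst v.val
    rwa [ZMod.natCast_rightInverse v] at this
  refine ⟨c 0, ?_⟩
  have hcyc : cycO l = ∑ v : ZMod l, oe v (v + 1) := by
    rw [cycO]
    have himg : (Finset.range l).image (fun i : ℕ => (i : ZMod l)) = Finset.univ := by
      ext v
      simp only [Finset.mem_image, Finset.mem_univ, iff_true, Finset.mem_range]
      exact ⟨v.val, v.val_lt, ZMod.natCast_rightInverse v⟩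
    rw [← himg, Finset.sum_image]
    intro i hi j hj hij
    rw [Finset.mem_coe, Finset.mem_range] at hi hj
    have := congrArg ZMod.val hij
    rwa [ZMod.val_cast_of_lt hi, ZMod.val_cast_of_lt hj] at this
  rw [hWsum, hcyc, Finset.smul_sum]
  exact Finset.sum_congr rfl fun v _ => by rw [hconst' v]
end

section
/- For any odd k > 3, the minion Pol(C_k, K_3) does not have bounded essential arity: for every n there is an n-ary polymorphism f: C_k^n → K_3 all of whose n coordinates are essential. Concretely, fixing a homomorphism h: C_k → K_3 with h(0)=h(2)=0 and h(1)=1, the function f(x_1,...,x_n) = 2 if x_1=...=x_n=1 and f(x_1,...,x_n) = h(x_1) otherwise, is a polymorphism from C_k to K_3 in which every coordinate is essential. -/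
/-- A coordinate `i` of a function on `n`-tuples is essential if changing only the `i`-th
argument can change the value. -/
def Essential {A B : Type*} {n : ℕ} (f : (Fin n → A) → B) (i : Fin n) : Prop :=
  ∃ a b, f a ≠ f (Function.update a i b)

/-!
Colour the cycle `0, 1, 0, 1, …` along `0, …, k - 2` and give `k - 1` the third colour; this is a
homomorphism `h : C_k → K_3` with `h 0 = h 2 = 0` and `h 1 = 1`. The function `f` agrees with the
homomorphism `x ↦ h x₁` except on the all-ones tuple, whose neighbours all have first coordinate
`0` or `2`, hence `h`-colour `0`, so the new value `2` keeps `f` a polymorphism. Changing any single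
coordinate of the all-ones tuple to `2` moves `f` from `2` to `h 1` or `h 2`, so every coordinate
is essential.
-/

section OffConstant

variable {A B : Type*} {n : ℕ} {h : A → B} {a : A} {c : B} {i₀ : Fin n}
  {f : (Fin n → A) → B}

theorem ne_of_forall_rel_of_eq_off_const {r : A → A → Prop} (hh : ∀ u v, r u v → h u ≠ h v)
    (hc : ∀ b, r a b ∨ r b a → h b ≠ c) (hf_const : ∀ x, (∀ i, x i = a) → f x = c)
    (hf_else : ∀ x, ¬ (∀ i, x i = a) → f x = h (x i₀)) :
    ∀ x y : Fin n → A, (∀ i, r (x i) (y i)) → f x ≠ f y := by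
  intro x y hxy
  have hr := hxy i₀
  by_cases hx : ∀ i, x i = a <;> by_cases hy : ∀ i, y i = a
  · rw [hx i₀, hy i₀] at hr
    exact (hh a a hr rfl).elim
  · rw [hx i₀] at hr
    rw [hf_const x hx, hf_else y hy]
    exact (hc _ (Or.inl hr)).symm
  · rw [hy i₀] at hr
    rw [hf_else x hx, hf_const y hy]
    exact hc _ (Or.inr hr)
  · rw [hf_else x hx, hf_else y hy]
    exact hh _ _ hr

theorem essential_of_eq_off_const {b : A} (hf_const : ∀ x, (∀ i, x i = a) → f x = c)
    (hf_else : ∀ x, ¬ (∀ i, x i = a) → f x = h (x i₀)) (hba : b ≠ a) (hca : h a ≠ c)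
    (hcb : h b ≠ c) (i : Fin n) : Essential f i := by
  refine ⟨fun _ => a, b, ?_⟩
  have hupdate : ¬ ∀ j, Function.update (fun _ => a) i b j = a := fun hall =>
    hba (by simpa using hall i)
  rw [hf_const _ fun _ => rfl, hf_else _ hupdate, Function.update_apply]
  split_ifs
  exacts [hcb.symm, hca.symm]

end OffConstant

def pathColoring (k m : ℕ) : ZMod 3 :=
  if m = k - 1 then 2 else if Even m then 0 else 1

theorem pathColoring_ne_succ_mod {k m : ℕ} (hk : 1 < k) (hm : m < k) :
    pathColoring k m ≠ pathColoring k ((m + 1) % k) := by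
  rcases Nat.lt_or_ge (m + 1) k with hlt | hge
  · rw [Nat.mod_eq_of_lt hlt]
    unfold pathColoring
    split_ifs <;> first | decide | omega | simp_all [Nat.even_add_one]
  · rw [show m + 1 = k by omega, Nat.mod_self]
    simp only [pathColoring, show m = k - 1 by omega, show 0 ≠ k - 1 by omega, if_true, if_false]
    decide

def cycleColoring (k : ℕ) (u : ZMod k) : ZMod 3 :=
  pathColoring k u.val

theorem cycleColoring_ne_add_one {k : ℕ} (hk : 1 < k) (u : ZMod k) :
    cycleColoring k u ≠ cycleColoring k (u + 1) := by
  have : Fact (1 < k) := ⟨hk⟩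
  rw [cycleColoring, cycleColoring, ZMod.val_add, ZMod.val_one]
  exact pathColoring_ne_succ_mod hk (ZMod.val_lt u)

theorem cycleColoring_ne_of_cycAdj {k : ℕ} (hk : 1 < k) :
    ∀ u v, CycAdj k u v → cycleColoring k u ≠ cycleColoring k v := by
  rintro u v (rfl | rfl)
  · exact cycleColoring_ne_add_one hk u
  · simpa using (cycleColoring_ne_add_one hk (u - 1)).symm

theorem cycleColoring_zero_one_two {k : ℕ} (hk : 3 < k) :
    cycleColoring k 0 = 0 ∧ cycleColoring k 1 = 1 ∧ cycleColoring k 2 = 0 := by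
  have : Fact (1 < k) := ⟨by omega⟩
  simp only [cycleColoring, pathColoring, ZMod.val_zero, ZMod.val_one, ZMod.val_two_eq_two_mod,
    Nat.mod_eq_of_lt (show 2 < k by omega)]
  refine ⟨?_, ?_, ?_⟩ <;> split_ifs <;> first | omega | simp_all

theorem eq_two_or_eq_zero_of_cycAdj_one {k : ℕ} {b : ZMod k}
    (hb : CycAdj k 1 b ∨ CycAdj k b 1) : b = 2 ∨ b = 0 := by
  rcases hb with (hb | hb) | (hb | hb)
  · exact Or.inl (by rw [hb]; norm_num)
  · exact Or.inr (by rw [hb, sub_self])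
  · exact Or.inr (by linear_combination -hb)
  · exact Or.inl (by linear_combination -hb)

open Classical in
theorem pol_cycle_K3_unbounded_essential_arity_general (k : ℕ) (hk : 3 < k)
    (n : ℕ) (hn : 0 < n) :
    (∃ h : ZMod k → ZMod 3,
      (∀ u v, CycAdj k u v → h u ≠ h v) ∧ h 0 = 0 ∧ h 1 = 1 ∧ h 2 = 0) ∧
    (∀ h : ZMod k → ZMod 3, (∀ u v, CycAdj k u v → h u ≠ h v) →
      h 0 = 0 → h 1 = 1 → h 2 = 0 →
      ((∀ x y : Fin n → ZMod k, (∀ i, CycAdj k (x i) (y i)) →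
          (if ∀ i, x i = 1 then (2 : ZMod 3) else h (x ⟨0, hn⟩)) ≠
          (if ∀ i, y i = 1 then (2 : ZMod 3) else h (y ⟨0, hn⟩))) ∧
        (∀ i : Fin n,
          Essential (fun x : Fin n → ZMod k =>
            if ∀ j, x j = 1 then (2 : ZMod 3) else h (x ⟨0, hn⟩)) i))) := by
  refine ⟨⟨cycleColoring k, cycleColoring_ne_of_cycAdj (by omega),
    cycleColoring_zero_one_two hk⟩, fun h hh h0 h1 h2 => ?_⟩
  set f : (Fin n → ZMod k) → ZMod 3 := fun x => if ∀ j, x j = 1 then 2 else h (x ⟨0, hn⟩)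
  have hf_const : ∀ x, (∀ j, x j = 1) → f x = 2 := fun _ hx => if_pos hx
  have hf_else : ∀ x, ¬ (∀ j, x j = 1) → f x = h (x ⟨0, hn⟩) := fun _ hx => if_neg hx
  have h21 : (2 : ZMod k) ≠ 1 := fun e => by simp [e, h1] at h2
  refine ⟨ne_of_forall_rel_of_eq_off_const hh ?_ hf_const hf_else,
    essential_of_eq_off_const hf_const hf_else h21 (by rw [h1]; decide) (by rw [h2]; decide)⟩
  intro b hb
  rcases eq_two_or_eq_zero_of_cycAdj_one hb with rfl | rfl
  · rw [h2]; decide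
  · rw [h0]; decide

open Classical in
/-- For odd `k > 3`, the minion `Pol(C_k, K_3)` does not have bounded essential arity:
there is a homomorphism `h : C_k → K_3` with `h 0 = h 2 = 0`, `h 1 = 1`, and for any such
`h` and any `n ≥ 1`, the function `f(x) = 2` if `x₁ = ⋯ = xₙ = 1`, and `f(x) = h(x₁)`
otherwise, is an `n`-ary polymorphism from `C_k` to `K_3` (the complete graph on `ZMod 3`)
in which every coordinate is essential. -/
theorem pol_cycle_K3_unbounded_essential_arity (k : ℕ) (hkodd : Odd k) (hk : 3 < k)
    (n : ℕ) (hn : 0 < n) :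
    (∃ h : ZMod k → ZMod 3,
      (∀ u v, CycAdj k u v → h u ≠ h v) ∧ h 0 = 0 ∧ h 1 = 1 ∧ h 2 = 0) ∧
    (∀ h : ZMod k → ZMod 3, (∀ u v, CycAdj k u v → h u ≠ h v) →
      h 0 = 0 → h 1 = 1 → h 2 = 0 →
      ((∀ x y : Fin n → ZMod k, (∀ i, CycAdj k (x i) (y i)) →
          (if ∀ i, x i = 1 then (2 : ZMod 3) else h (x ⟨0, hn⟩)) ≠
          (if ∀ i, y i = 1 then (2 : ZMod 3) else h (y ⟨0, hn⟩))) ∧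
        (∀ i : Fin n,
          Essential (fun x : Fin n → ZMod k =>
            if ∀ j, x j = 1 then (2 : ZMod 3) else h (x ⟨0, hn⟩)) i))) :=
  pol_cycle_K3_unbounded_essential_arity_general k hk n hn
end

section
/- Every polymorphism f: K_3^n → K_3 (i.e., graph homomorphism from the n-th direct power of K_3 to K_3) has at most one essential coordinate; equivalently, every such f is of the form f(x_1,...,x_n) = σ(x_i) for some coordinate i and some permutation σ of {0,1,2}. -/
private lemma fin3_cases (y : Fin 3) : y = 0 ∨ y = 1 ∨ y = 2 := by revert y; decide

private lemma fin3_third (a b : Fin 3) (h : a ≠ b) : a ≠ -(a+b) ∧ b ≠ -(a+b) := by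
  revert h; revert a b; decide

private lemma fin3_mem' (a b y : Fin 3) (h : a ≠ b) (hy : y ≠ -(a+b)) : y = a ∨ y = b := by
  revert h hy; revert a b y; decide

private lemma fin3_succ (a : Fin 3) : a ≠ a + 1 := by revert a; decide

private lemma fin3_resolve (a c y : Fin 3) (h : a ≠ c) (h1 : y ≠ a) (h2 : y ≠ -(a+c)) : y = c := by
  revert h h1 h2; revert a c y; decide

private lemma bin_mem (f : Fin 3 → Fin 3 → Fin 3)
    (hf : ∀ a a' b b', a ≠ a' → b ≠ b' → f a b ≠ f a' b') (a b : Fin 3) :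
    f a b = f a a ∨ f a b = f b b := by
  by_cases hab : a = b
  · exact Or.inl (by rw [hab])
  · have hinj : Function.Injective (fun a => f a a) := by
      intro x x' h
      by_contra hne
      exact hf x x' x x' hne hne h
    obtain ⟨y, hy⟩ := ((Finite.injective_iff_bijective).1 hinj).2 (f a b)
    have hc : f a b ≠ f (-(a+b)) (-(a+b)) :=
      hf a (-(a+b)) b (-(a+b)) (fin3_third a b hab).1 (fin3_third a b hab).2
    have hyc : y ≠ -(a+b) := by
      intro h; rw [h] at hy; exact hc hy.symm
    rcases fin3_mem' a b y hab hyc with h | h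
    · exact Or.inl (by rw [← hy, h])
    · exact Or.inr (by rw [← hy, h])

private lemma bin_second (f : Fin 3 → Fin 3 → Fin 3)
    (hf : ∀ a a' b b', a ≠ a' → b ≠ b' → f a b ≠ f a' b')
    (h01 : f 0 1 = f 1 1) : ∀ a b, f a b = f b b := by
  have mem := bin_mem f hf
  have h10 : f 1 0 = f 0 0 := by
    rcases mem 1 0 with h | h
    · exact absurd (h.trans h01.symm) (hf 1 0 0 1 (by decide) (by decide))
    · exact h
  have h12 : f 1 2 = f 2 2 := by
    rcases mem 1 2 with h | h
    · exact absurd (h.trans h01.symm) (hf 1 0 2 1 (by decide) (by decide))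
    · exact h
  have h20 : f 2 0 = f 0 0 := by
    rcases mem 2 0 with h | h
    · exact absurd (h.trans h12.symm) (hf 2 1 0 2 (by decide) (by decide))
    · exact h
  have h21 : f 2 1 = f 1 1 := by
    rcases mem 2 1 with h | h
    · exact absurd (h.trans h12.symm) (hf 2 1 1 2 (by decide) (by decide))
    · exact h
  have h02 : f 0 2 = f 2 2 := by
    rcases mem 0 2 with h | h
    · exact absurd (h.trans h10.symm) (hf 0 1 2 0 (by decide) (by decide))
    · exact h
  intro a b
  rcases fin3_cases a with rfl | rfl | rfl <;> rcases fin3_cases b with rfl | rfl | rfl <;>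
    first | rfl | assumption

private lemma fin3_bin (f : Fin 3 → Fin 3 → Fin 3)
    (hf : ∀ a a' b b', a ≠ a' → b ≠ b' → f a b ≠ f a' b') :
    (∀ a b b', f a b = f a b') ∨ (∀ a a' b, f a b = f a' b) := by
  rcases bin_mem f hf 0 1 with h | h
  · left
    have h10 : f 1 0 = f 1 1 := by
      rcases bin_mem f hf 1 0 with h' | h'
      · exact h'
      · exact absurd (h'.trans h.symm) (hf 1 0 0 1 (by decide) (by decide))
    have := bin_second (fun a b => f b a)
      (fun a a' b b' ha hb => hf b b' a a' hb ha) h10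
    intro a b b'
    exact (this b a).trans (this b' a).symm
  · right
    have := bin_second f hf h
    intro a a' b
    exact (this a b).trans (this a' b).symm

private lemma prop_lemma {n : ℕ} (f : (Fin n → Fin 3) → Fin 3)
    (hf : ∀ x y : Fin n → Fin 3, (∀ i, x i ≠ y i) → f x ≠ f y)
    (j : Fin n) (g : Fin 3 → Fin 3) (hg : Function.Bijective g)
    (hbase : ∀ a b, f (Function.update (fun _ => a) j b) = g b) :
    ∀ x, f x = g (x j) := by
  have pin : ∀ (v b : Fin 3), (∀ b', b' ≠ b → v ≠ g b') → v = g b := by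
    intro v b h
    obtain ⟨c, hc⟩ := hg.2 v
    by_cases hcb : c = b
    · rw [← hc, hcb]
    · exact absurd hc (fun h' => h c hcb h'.symm)
  have key : ∀ (s : Finset (Fin n)) (z : Fin n → Fin 3),
      (∀ i, i ∉ s → i ≠ j → z i = 0) → ∀ b, f (Function.update z j b) = g b := by
    intro s
    induction s using Finset.induction_on with
    | empty =>
      intro z hz b
      have hzz : Function.update z j b = Function.update (fun _ => (0:Fin 3)) j b := by
        funext i
        by_cases h : i = j
        · subst h; rw [Function.update_self, Function.update_self]
        · rw [Function.update_of_ne h, Function.update_of_ne h]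
          exact hz i (Finset.notMem_empty i) h
      rw [hzz]; exact hbase 0 b
    | @insert i s his ih =>
      intro z hz b
      by_cases hij : i = j
      · apply ih
        intro i' h1 h2
        refine hz i' ?_ h2
        intro hmem
        rcases Finset.mem_insert.1 hmem with h' | h'
        · exact h2 (h'.trans hij)
        · exact h1 h'
      · set z0 := Function.update z i 0 with hz0def
        have hz0 : ∀ i', i' ∉ s → i' ≠ j → z0 i' = 0 := by
          intro i' h1 h2
          by_cases h : i' = i
          · subst h; rw [hz0def, Function.update_self]
          · rw [hz0def, Function.update_of_ne h]
            refine hz i' ?_ h2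
            intro hmem
            rcases Finset.mem_insert.1 hmem with h' | h'
            · exact h h'
            · exact h1 h'
        have P0 := ih z0 hz0
        by_cases hzi : z i = 0
        · have hzz : z0 = z := by
            funext i'
            by_cases h : i' = i
            · subst h; rw [hz0def, Function.update_self, hzi]
            · rw [hz0def, Function.update_of_ne h]
          rw [← hzz]; exact P0 b
        · have hzi' : z i ≠ (0:Fin 3) := hzi
          set y : Fin n → Fin 3 := fun k => if k = i then -((z i) + 0) else z k + 1 with hydef
          have hy1 : z i ≠ y i := by
            rw [hydef]; simp only [if_pos rfl]
            exact (fin3_third (z i) 0 hzi').1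
          have hy2 : (0:Fin 3) ≠ y i := by
            rw [hydef]; simp only [if_pos rfl]
            exact (fin3_third (z i) 0 hzi').2
          have hP1 : ∀ b, f (Function.update y j b) = g b := by
            intro b
            apply pin
            intro b' hb'
            rw [← P0 b']
            apply hf
            intro k
            by_cases hk : k = j
            · subst hk; rw [Function.update_self, Function.update_self]; exact Ne.symm hb'
            · rw [Function.update_of_ne hk, Function.update_of_ne hk]
              by_cases hki : k = i
              · subst hki
                rw [hz0def, Function.update_self]
                exact fun h => hy2 h.symm
              · rw [hz0def, Function.update_of_ne hki, hydef]
                simp only [if_neg hki]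
                exact fun h => fin3_succ (z k) h.symm
          apply pin
          intro b' hb'
          rw [← hP1 b']
          apply hf
          intro k
          by_cases hk : k = j
          · subst hk; rw [Function.update_self, Function.update_self]; exact Ne.symm hb'
          · rw [Function.update_of_ne hk, Function.update_of_ne hk]
            by_cases hki : k = i
            · subst hki; exact hy1
            · rw [hydef]; simp only [if_neg hki]
              exact fin3_succ (z k)
  intro x
  have h := key Finset.univ x (fun i h _ => absurd (Finset.mem_univ i) h) (x j)
  rw [Function.update_eq_self] at h
  exact h

private lemma caseA {n : ℕ} (f : (Fin n → Fin 3) → Fin 3)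
    (hf : ∀ x y : Fin n → Fin 3, (∀ i, x i ≠ y i) → f x ≠ f y)
    (i0 i1 : Fin n) (hne01 : i0 ≠ i1)
    (hA : ∀ (j : Fin n) (a b : Fin 3), f (Function.update (fun _ => a) j b) = f (fun _ => a)) :
    False := by
  classical
  set δ : Fin 3 → Fin 3 := fun a => f (fun _ => a) with hδdef
  have hδinj : Function.Injective δ := by
    intro a a' h
    by_contra hne
    exact hf (fun _ => a) (fun _ => a') (fun i => hne) h
  have hδsurj : Function.Surjective δ := ((Finite.injective_iff_bijective).1 hδinj).2
  have claim : ∀ (k : ℕ) (S : Finset (Fin n)) (u : Fin n → Fin 3) (c : Fin 3),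
      S.card = k → (∀ i ∉ S, u i = c) → f u = δ c := by
    intro k
    induction k using Nat.strong_induction_on with
    | _ k IH =>
    intro S u c hcard hu
    have star : ∀ (u' : Fin n → Fin 3) (c' x : Fin 3) (j : Fin n), j ∈ S →
        (∀ i ∉ S, u' i = c') → x ≠ c' → x ≠ u' j → f u' ≠ δ x := by
      intro u' c' x j hj hu' hxc hxj
      have hcard' : (S.erase j).card < k := by
        rw [← hcard]; exact Finset.card_erase_lt_of_mem hj
      have hv : f (fun i => if i ∈ S ∧ i ≠ j then u' i + 1 else x) = δ x := by
        apply IH _ hcard' (S.erase j) _ x rfl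
        intro i hi
        simp only [if_neg (fun h : i ∈ S ∧ i ≠ j => hi (Finset.mem_erase.2 ⟨h.2, h.1⟩))]
      have hnev : ∀ i, u' i ≠ (fun i => if i ∈ S ∧ i ≠ j then u' i + 1 else x) i := by
        intro i
        simp only
        by_cases h : i ∈ S ∧ i ≠ j
        · rw [if_pos h]; exact fin3_succ (u' i)
        · rw [if_neg h]
          by_cases hiS : i ∈ S
          · have hij : i = j := by
              by_contra hij
              exact h ⟨hiS, hij⟩
            rw [hij]
            exact fun hh => hxj hh.symm
          · rw [hu' i hiS]
            exact fun hh => hxc hh.symm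
      exact fun heq => hf u' _ hnev (heq.trans hv.symm)
    have twoVals : ∀ (u' : Fin n → Fin 3) (c' : Fin 3), (∀ i ∉ S, u' i = c') →
        ∀ (j j' : Fin n), j ∈ S → j' ∈ S → u' j ≠ u' j' → f u' = δ c' := by
      intro u' c' hu' j j' hj hj' hjj
      obtain ⟨y, hy⟩ := hδsurj (f u')
      by_cases hyc : y = c'
      · rw [← hy, hyc]
      · exfalso
        by_cases hyj : y = u' j
        · exact star u' c' y j' hj' hu' hyc (fun h => hjj (hyj ▸ h ▸ rfl)) hy.symm
        · exact star u' c' y j hj hu' hyc hyj hy.symm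
    by_cases hS : ∃ j ∈ S, ∃ j' ∈ S, u j ≠ u j'
    · obtain ⟨j, hj, j', hj', hjj⟩ := hS
      exact twoVals u c hu j j' hj hj' hjj
    · push_neg at hS
      rcases Finset.eq_empty_or_nonempty S with rfl | ⟨j₁, hj₁⟩
      · have huc : u = fun _ => c := funext fun i => hu i (Finset.notMem_empty i)
        rw [huc]
      · by_cases hac : u j₁ = c
        · have huc : u = fun _ => c := by
            funext i
            by_cases h : i ∈ S
            · rw [hS i h j₁ hj₁, hac]
            · exact hu i h
          rw [huc]
        · by_cases h2 : ∃ j₂ ∈ S, j₂ ≠ j₁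
          · obtain ⟨j₂, hj₂, hne12⟩ := h2
            have hbne := fin3_third (u j₁) c hac
            have hfb : f u ≠ δ (-(u j₁ + c)) :=
              star u c _ j₁ hj₁ hu (Ne.symm hbne.2) (Ne.symm hbne.1)
            have hfa : f u ≠ δ (u j₁) := by
              have hvoff : ∀ i ∉ S,
                  (fun i => if i = j₁ then -(u j₁ + c) else if i ∈ S then c else u j₁) i = u j₁ := by
                intro i hi
                simp only
                rw [if_neg (fun h : i = j₁ => hi (h ▸ hj₁)), if_neg hi]
              have hv : f (fun i => if i = j₁ then -(u j₁ + c) else if i ∈ S then c else u j₁)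
                  = δ (u j₁) := by
                apply twoVals _ (u j₁) hvoff j₁ j₂ hj₁ hj₂
                simp only [if_pos, if_neg hne12, if_pos hj₂]
                exact fun h => hbne.2 h.symm
              have hnv : ∀ i, u i ≠
                  (fun i => if i = j₁ then -(u j₁ + c) else if i ∈ S then c else u j₁) i := by
                intro i
                simp only
                by_cases h : i = j₁
                · rw [if_pos h, h]; exact hbne.1
                · rw [if_neg h]
                  by_cases hiS : i ∈ S
                  · rw [if_pos hiS, hS i hiS j₁ hj₁]; exact hac
                  · rw [if_neg hiS, hu i hiS]; exact Ne.symm hac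
              exact fun heq => hf u _ hnv (heq.trans hv.symm)
            obtain ⟨y, hy⟩ := hδsurj (f u)
            have hy1 : y ≠ u j₁ := fun h => hfa (by rw [← hy, h])
            have hy2 : y ≠ -(u j₁ + c) := fun h => hfb (by rw [← hy, h])
            rw [← hy, fin3_resolve (u j₁) c y hac hy1 hy2]
          · push_neg at h2
            have huu : u = Function.update (fun _ => c) j₁ (u j₁) := by
              funext i
              by_cases h : i = j₁
              · subst h; rw [Function.update_self]
              · rw [Function.update_of_ne h]
                refine hu i ?_
                intro hmem
                exact h (h2 i hmem)
            rw [huu, hA j₁ c (u j₁)]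
  -- final contradiction
  have habs : ∀ x : Fin 3, f (fun i => if i = i0 then (0:Fin 3) else 1) ≠ δ x := by
    intro x
    obtain ⟨j, hj⟩ : ∃ j, (if j = i0 then (0:Fin 3) else 1) ≠ x := by
      by_cases hx : x = 0
      · refine ⟨i1, ?_⟩
        rw [if_neg (Ne.symm hne01), hx]
        decide
      · exact ⟨i0, by rw [if_pos rfl]; exact fun h => hx h.symm⟩
    have hv : f (fun i => if i = j then x else (if i = i0 then (0:Fin 3) else 1) + 1) = δ x := by
      apply claim (Finset.univ.erase j).card (Finset.univ.erase j) _ x rfl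
      intro i hi
      have hij : i = j := by
        by_contra hij
        exact hi (Finset.mem_erase.2 ⟨hij, Finset.mem_univ i⟩)
      simp only [if_pos hij]
    have hnv : ∀ i, (if i = i0 then (0:Fin 3) else 1) ≠
        (fun i => if i = j then x else (if i = i0 then (0:Fin 3) else 1) + 1) i := by
      intro i
      simp only
      by_cases h : i = j
      · rw [if_pos h, h]; exact hj
      · rw [if_neg h]; exact fin3_succ _
    exact fun heq => hf _ _ hnv (heq.trans hv.symm)
  obtain ⟨y, hy⟩ := hδsurj (f (fun i => if i = i0 then (0:Fin 3) else 1))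
  exact habs y hy.symm


/-- Every polymorphism `f : K_3ⁿ → K_3` (graph homomorphism from the `n`-th direct power
of the complete graph on `Fin 3` to `K_3`) is of the form `f(x) = σ(x_i)` for some
coordinate `i` and some permutation `σ` of `Fin 3`; in particular it has at most one
essential coordinate. -/
theorem pol_K3_K3_essentially_unary (n : ℕ) (f : (Fin n → Fin 3) → Fin 3)
    (hf : ∀ x y : Fin n → Fin 3, (∀ i, x i ≠ y i) → f x ≠ f y) :
    ∃ (i : Fin n) (σ : Equiv.Perm (Fin 3)), ∀ x, f x = σ (x i) := by
  classical
  cases n with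
  | zero =>
    exact absurd rfl (hf (fun _ => 0) (fun _ => 0) (fun i => i.elim0))
  | succ m =>
    by_cases hcase : ∃ j : Fin (m+1), ∀ (a a' b : Fin 3),
        f (Function.update (fun _ => a) j b) = f (Function.update (fun _ => a') j b)
    · obtain ⟨j, hj⟩ := hcase
      set g : Fin 3 → Fin 3 := fun b => f (Function.update (fun _ => (0:Fin 3)) j b) with hgdef
      have hginj : Function.Injective g := by
        intro b b' h
        by_contra hbb
        refine hf (Function.update (fun _ => (0:Fin 3)) j b)
          (Function.update (fun _ => (1:Fin 3)) j b') ?_ (h.trans (hj 0 1 b'))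
        intro i
        by_cases hij : i = j
        · subst hij; rw [Function.update_self, Function.update_self]; exact hbb
        · rw [Function.update_of_ne hij, Function.update_of_ne hij]; decide
      have hgbij := (Finite.injective_iff_bijective).1 hginj
      have hbase : ∀ a b, f (Function.update (fun _ => a) j b) = g b := fun a b => hj a 0 b
      refine ⟨j, Equiv.ofBijective g hgbij, ?_⟩
      intro x
      rw [prop_lemma f hf j g hgbij hbase x]
      rfl
    · push_neg at hcase
      exfalso
      have hA : ∀ (j : Fin (m+1)) (a b : Fin 3),
          f (Function.update (fun _ => a) j b) = f (fun _ => a) := by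
        intro j
        have hpoly : ∀ a a' b b' : Fin 3, a ≠ a' → b ≠ b' →
            f (Function.update (fun _ => a) j b) ≠ f (Function.update (fun _ => a') j b') := by
          intro a a' b b' ha hb
          apply hf
          intro i
          by_cases hij : i = j
          · subst hij; rw [Function.update_self, Function.update_self]; exact hb
          · rw [Function.update_of_ne hij, Function.update_of_ne hij]; exact ha
        rcases fin3_bin (fun a b => f (Function.update (fun _ => a) j b)) hpoly with h | h
        · intro a b
          have h1 := h a b a
          rw [h1]
          exact congrArg f (Function.update_eq_self j (fun _ => a))
        · exfalso
          obtain ⟨a, a', b, hne⟩ := hcase j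
          exact hne (h a a' b)
      cases m with
      | zero =>
        have h01 : f (fun _ => (0:Fin 3)) ≠ f (fun _ => (1:Fin 3)) :=
          hf _ _ (fun i => by decide)
        apply h01
        have hupd : Function.update (fun _ => (0:Fin 3)) (0 : Fin 1) (1:Fin 3)
            = fun _ => (1:Fin 3) := by
          funext i
          have hi : i = 0 := Subsingleton.elim i 0
          rw [hi, Function.update_self]
        rw [← hA 0 0 1, hupd]
      | succ m' =>
        have h01 : (0 : Fin (m'+2)) ≠ 1 := by
          intro h
          have := congrArg Fin.val h
          simp [Fin.val_zero, Fin.val_one] at this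
        exact caseA f hf 0 1 h01 hA
end

section
/- Let k be odd with k ≥ 3N for an odd N, and define the graph D_k on vertex set {0,...,k-1} where (u,v) is an edge iff the distance between u and v in the cycle C_k is odd and at most N (equivalently, u and v are joined by a walk of length exactly N in C_k). Then for every n and all coefficients c_1,...,c_n ∈ ℤ with Σ|c_i| ≤ N and Σ c_i odd, the function f'(x_1,...,x_n) = (Σ c_i x_i) mod k is a graph homomorphism from C_k^n to D_k. -/
/-- The distance between two vertices of the cycle `C_k`. -/
def cdist (k : ℕ) (u v : ZMod k) : ℕ := min (u - v).val (v - u).val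

/-- Adjacency in the auxiliary graph `D_k`: `u` and `v` are adjacent iff their distance in
the cycle `C_k` is odd and at most `N`. -/
def DAdj (k N : ℕ) (u v : ZMod k) : Prop := Odd (cdist k u v) ∧ cdist k u v ≤ N

theorem cdist_eq_natAbs_valMinAbs {k : ℕ} [NeZero k] (u v : ZMod k) :
    cdist k u v = (v - u).valMinAbs.natAbs := by
  rw [cdist, ZMod.valMinAbs_natAbs_eq_min, ← neg_sub, ZMod.neg_val]
  split_ifs <;> simp_all [min_comm]

theorem cdist_eq_natAbs_of_sub_eq_intCast {k : ℕ} {u v : ZMod k} {d : ℤ}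
    (huv : v - u = d) (hd : 2 * d.natAbs < k) : cdist k u v = d.natAbs := by
  have : NeZero k := ⟨by omega⟩
  rw [cdist_eq_natAbs_valMinAbs, (ZMod.valMinAbs_spec _ d).2 ⟨huv, by constructor <;> omega⟩]

theorem CycAdj.exists_sub_eq_intCast {m : ℕ} {u v : ZMod m} (h : CycAdj m u v) :
    ∃ s : ℤ, |s| = 1 ∧ v - u = s := by
  rcases h with rfl | rfl
  · exact ⟨1, by simp⟩
  · exact ⟨-1, by simp⟩

theorem abs_sum_mul_le_sum_abs {ι : Type*} (t : Finset ι) (c s : ι → ℤ)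
    (hs : ∀ i ∈ t, |s i| ≤ 1) :
    |∑ i ∈ t, c i * s i| ≤ ∑ i ∈ t, |c i| :=
  (Finset.abs_sum_le_sum_abs _ _).trans <| Finset.sum_le_sum fun i hi => by
    rw [abs_mul]; exact mul_le_of_le_one_right (abs_nonneg _) (hs i hi)

theorem odd_sum_mul_iff_of_odd {ι : Type*} (t : Finset ι) (c s : ι → ℤ)
    (hs : ∀ i ∈ t, Odd (s i)) :
    Odd (∑ i ∈ t, c i * s i) ↔ Odd (∑ i ∈ t, c i) := by
  have : Even (∑ i ∈ t, c i * s i - ∑ i ∈ t, c i) := by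
    rw [← Finset.sum_sub_distrib]
    refine Finset.even_sum _ fun i hi => ?_
    rw [← mul_sub_one]
    exact (hs i hi).sub_odd odd_one |>.mul_left _
  rw [← Int.not_even_iff_odd, ← Int.not_even_iff_odd, not_iff_not]
  exact Int.even_sub.mp this

theorem linear_mod_hom_to_Dk_general (k N : ℕ) (hNodd : Odd N)
    (hNk : 3 * N ≤ k) (n : ℕ) (c : Fin n → ℤ)
    (hc : (∑ i, |c i|) ≤ (N : ℤ)) (hcodd : Odd (∑ i, c i))
    (x y : Fin n → ZMod k) (hxy : ∀ i, CycAdj k (x i) (y i)) :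
    DAdj k N (∑ i, (c i : ZMod k) * x i) (∑ i, (c i : ZMod k) * y i) := by
  choose s hs hxs using fun i => (hxy i).exists_sub_eq_intCast
  have hdiff : ∑ i, (c i : ZMod k) * y i - ∑ i, (c i : ZMod k) * x i
      = ((∑ i, c i * s i : ℤ) : ZMod k) := by
    push_cast
    simp only [← Finset.sum_sub_distrib, ← mul_sub, hxs]
  have hodd : Odd (∑ i, c i * s i) := by
    refine (odd_sum_mul_iff_of_odd _ c s fun i _ => ?_).2 hcodd
    rcases (abs_eq zero_le_one).1 (hs i) with h | h <;> rw [h] <;> decide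
  have hle : (∑ i, c i * s i).natAbs ≤ N := by
    have := (abs_sum_mul_le_sum_abs _ c s fun i _ => (hs i).le).trans hc
    rwa [Int.abs_eq_natAbs, Nat.cast_le] at this
  have hpos := hNodd.pos
  rw [DAdj, cdist_eq_natAbs_of_sub_eq_intCast hdiff (by omega)]
  exact ⟨Int.natAbs_odd.2 hodd, by omega⟩

/-- Let `k` be odd with `k ≥ 3N` for an odd `N`. For all integer coefficients `c₁,…,cₙ`
with `Σ|cᵢ| ≤ N` and `Σcᵢ` odd, the function `f'(x₁,…,xₙ) = (Σ cᵢ xᵢ) mod k` is a graph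
homomorphism from `C_kⁿ` to `D_k`. -/
theorem linear_mod_hom_to_Dk (k N : ℕ) (hkodd : Odd k) (hNodd : Odd N)
    (hNk : 3 * N ≤ k) (n : ℕ) (c : Fin n → ℤ)
    (hc : (∑ i, |c i|) ≤ (N : ℤ)) (hcodd : Odd (∑ i, c i))
    (x y : Fin n → ZMod k) (hxy : ∀ i, CycAdj k (x i) (y i)) :
    DAdj k N (∑ i, (c i : ZMod k) * x i) (∑ i, (c i : ZMod k) * y i) :=
  linear_mod_hom_to_Dk_general k N hNodd hNk n c hc hcodd x y hxy
end

section
/- Let N ≥ 1 be odd and k = 3N. Define D_k on vertices {0,...,k-1} with (u,v) an edge iff the cycle-distance of u and v in C_k is odd and at most N. Then the map h_k: {0,...,k-1} → {0,1,2} defined by h_k(x) = 0 if (x < N and x even) or (x > 2N and x odd); h_k(x) = 1 if x < 2N and x odd; h_k(x) = 2 if x > N and x even, is a graph homomorphism from D_k to K_3 (i.e., a proper 3-colouring of D_k). -/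
/-- The colouring `h_k : {0,…,k-1} → {0,1,2}`: `0` if (`x < N` and `x` even) or
(`x > 2N` and `x` odd); `1` if `x < 2N` and `x` odd; `2` if `x > N` and `x` even. -/
def hcol (N k : ℕ) (x : ZMod k) : Fin 3 :=
  if (x.val < N ∧ Even x.val) ∨ (2 * N < x.val ∧ Odd x.val) then 0
  else if x.val < 2 * N ∧ Odd x.val then 1
  else 2

/-! The cyclic distance of two vertices `a ≥ b` of `C_k` is `min d (k - d)` with `d = a - b`.
For odd `k` exactly one of `d`, `k - d` is odd, so adjacency in `D_k` means that either `d` is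
odd and at most `N`, or `d` is even and at least `k - N`. For `k = 3N` each colour class of
`h_k` avoids both: its same-parity pairs are less than `2N` apart, and pairs across the two
halves of colour `0` have odd difference greater than `N`. -/

theorem cdist_comm (k : ℕ) (u v : ZMod k) : cdist k u v = cdist k v u :=
  min_comm _ _

theorem DAdj.symm {k N : ℕ} {u v : ZMod k} (h : DAdj k N u v) : DAdj k N v u := by
  rwa [DAdj, cdist_comm]

theorem cdist_eq_min_of_val_le {k : ℕ} [NeZero k] {u v : ZMod k} (h : v.val ≤ u.val) :
    cdist k u v = min (u.val - v.val) (k - (u.val - v.val)) := by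
  rcases eq_or_ne u v with rfl | huv
  · simp [cdist]
  have : NeZero (u - v) := ⟨sub_ne_zero.mpr huv⟩
  rw [cdist, ← neg_sub u v, ZMod.val_neg_of_ne_zero, ZMod.val_sub h]

theorem odd_le_or_even_ge_of_min_sub {k N d : ℕ} (hk : Odd k) (hodd : Odd (min d (k - d)))
    (hle : min d (k - d) ≤ N) : Odd d ∧ d ≤ N ∨ Even d ∧ k - N ≤ d := by
  rw [Nat.odd_iff] at hk hodd ⊢
  rw [Nat.even_iff]
  omega

/-- For odd `N` and `k = 3N`, the map `h_k` is a graph homomorphism from `D_k` to `K_3`,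
i.e. a proper 3-colouring of `D_k`. -/
theorem hcol_is_colouring (N : ℕ) (hNodd : Odd N) :
    ∀ u v : ZMod (3 * N), DAdj (3 * N) N u v → hcol N (3 * N) u ≠ hcol N (3 * N) v := by
  intro u v hadj
  wlog hvu : v.val ≤ u.val generalizing u v
  · exact (this v u hadj.symm (le_of_not_ge hvu)).symm
  have : NeZero (3 * N) := ⟨by have := hNodd.pos; omega⟩
  obtain ⟨hodd, hle⟩ := hadj
  rw [cdist_eq_min_of_val_le hvu] at hodd hle
  have hdiff := odd_le_or_even_ge_of_min_sub (Nat.odd_mul.mpr ⟨by decide, hNodd⟩) hodd hle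
  have := u.val_lt
  simp only [hcol, Nat.odd_iff, Nat.even_iff] at hdiff hNodd ⊢
  split_ifs <;> omega
end
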